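/- arXiv:math/0109033 — 4 statements merged into one kernel-verified Lean document; each statement's English description precedes it below -/
import Mathlib

section
/- Let F be a finite field, let ψ : F → ℂ be a nontrivial additive character, and fix a monotone block function b : Fin n → Fin k. For every g ∈ GL(n,F) one has Σ_{m ∈ 𝔫} ψ(tr(g·(1+m))) = |𝔫|·ψ(tr g) if g lies in the standard parabolic P (i.e. g i j = 0 whenever b i > b j), and Σ_{m ∈ 𝔫} ψ(tr(g·(1+m))) = 0 if g does not lie in P. (This is the function-theoretic content, for G = GL(n) and the standard representation, of the paper's Conjecture 'main' asserting that the pushforward (q_P)_! of the γ-sheaf Φ_{G,ρ,ψ} under G → G/U vanishes outside the Levi subgroup M.) -/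
/-!
Writing `tr (g (1 + m)) = tr g + tr (g m)`, the sum factors as `ψ (tr g)` times the sum of the
character `ψ ∘ ℓ_g` over `𝔫`, where `ℓ_g m = tr (g m) = ∑ g i j m j i` is a linear form on `𝔫`.
The form `ℓ_g` vanishes exactly when `g i j = 0` for all `b j < b i`, i.e. when `g ∈ P`
(test it on the elementary matrices `E j i ∈ 𝔫`). A nonzero linear form is surjective, so
`ψ ∘ ℓ_g` is then a nontrivial character of `𝔫` and its values sum to zero.
-/

/-- The nilpotent radical `𝔫` of the standard parabolic determined by the monotone
block function `b`: matrices `m` with `m i j = 0` unless `b i < b j`. -/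
def NilRad {F : Type} [Field F] {n k : ℕ} (b : Fin n → Fin k) : Type :=
  {m : Matrix (Fin n) (Fin n) F // ∀ i j : Fin n, ¬ b i < b j → m i j = 0}

noncomputable instance {F : Type} [Field F] [Fintype F] [DecidableEq F] {n k : ℕ}
    (b : Fin n → Fin k) : Fintype (NilRad (F := F) b) := by
  unfold NilRad; classical infer_instance

open Matrix

theorem AddChar.sum_comp_linearMap_eq_zero {F V R : Type*} [Field F] [AddCommGroup V]
    [Module F V] [Fintype V] [CommRing R] [IsDomain R] {ψ : AddChar F R} (hψ : ψ ≠ 1)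
    {φ : V →ₗ[F] F} (hφ : φ ≠ 0) : ∑ v, ψ (φ v) = 0 := by
  refine AddChar.sum_eq_zero_of_ne_one (ψ := ψ.compAddMonoidHom φ.toAddMonoidHom) fun h ↦ hψ ?_
  refine AddChar.compAddMonoidHom_injective_left φ.toAddMonoidHom
    (LinearMap.surjective_iff_ne_zero.2 hφ) ?_
  exact h.trans (by ext; rfl)

section Nilradical

variable {ι κ R : Type*} [LT κ] [Semiring R] {b : ι → κ}

variable (R b) in
def nilRadSubmodule : Submodule R (Matrix ι ι R) where
  carrier := {m | ∀ i j, ¬ b i < b j → m i j = 0}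
  add_mem' hm hm' i j h := by simp [hm i j h, hm' i j h]
  zero_mem' _ _ _ := rfl
  smul_mem' c m hm i j h := by simp [hm i j h]

theorem mem_nilRadSubmodule {m : Matrix ι ι R} :
    m ∈ nilRadSubmodule R b ↔ ∀ i j, ¬ b i < b j → m i j = 0 :=
  Iff.rfl

theorem single_mem_nilRadSubmodule [DecidableEq ι] {i j : ι} (h : b i < b j) (c : R) :
    single i j c ∈ nilRadSubmodule R b := by
  intro i' j' h'
  rw [single_apply, if_neg]
  rintro ⟨rfl, rfl⟩
  exact h' h

variable [Fintype ι]

theorem trace_mul_eq_zero_of_mem_nilRadSubmodule {g m : Matrix ι ι R}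
    (hg : ∀ i j, b j < b i → g i j = 0) (hm : m ∈ nilRadSubmodule R b) : (g * m).trace = 0 := by
  simp only [trace, diag, mul_apply]
  refine Finset.sum_eq_zero fun i _ ↦ Finset.sum_eq_zero fun j _ ↦ ?_
  by_cases h : b j < b i
  · rw [hg i j h, zero_mul]
  · rw [mem_nilRadSubmodule.1 hm j i h, mul_zero]

theorem exists_trace_mul_ne_zero_of_mem_nilRadSubmodule [DecidableEq ι] {g : Matrix ι ι R}
    (hg : ¬ ∀ i j, b j < b i → g i j = 0) : ∃ m ∈ nilRadSubmodule R b, (g * m).trace ≠ 0 := by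
  push Not at hg
  obtain ⟨i, j, hji, hgij⟩ := hg
  exact ⟨single j i 1, single_mem_nilRadSubmodule hji 1, by simpa [trace_mul_single] using hgij⟩

end Nilradical

def nilRadEquivSubmodule {F : Type} [Field F] {n k : ℕ} (b : Fin n → Fin k) :
    NilRad (F := F) b ≃ nilRadSubmodule F b :=
  Equiv.subtypeEquivRight fun _ ↦ mem_nilRadSubmodule.symm

theorem sum_psi_trace_over_nilradical_general {F : Type} [Field F] [Fintype F] [DecidableEq F]
    (ψ : AddChar F ℂ) (hψ : ψ ≠ 1) {n k : ℕ} (b : Fin n → Fin k)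
    (g : GL (Fin n) F) :
    ((∀ i j : Fin n, b j < b i → (g : Matrix (Fin n) (Fin n) F) i j = 0) →
      ∑ m : NilRad (F := F) b,
          ψ (((g : Matrix (Fin n) (Fin n) F) * (1 + m.1)).trace)
        = (Fintype.card (NilRad (F := F) b) : ℂ) *
            ψ ((g : Matrix (Fin n) (Fin n) F).trace)) ∧
    ((¬ ∀ i j : Fin n, b j < b i → (g : Matrix (Fin n) (Fin n) F) i j = 0) →
      ∑ m : NilRad (F := F) b,
          ψ (((g : Matrix (Fin n) (Fin n) F) * (1 + m.1)).trace) = 0) := by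
  classical
  let ℓ : nilRadSubmodule F b →ₗ[F] F :=
    traceLinearMap _ F F ∘ₗ LinearMap.mulLeft F (g : Matrix (Fin n) (Fin n) F) ∘ₗ
      (nilRadSubmodule F b).subtype
  have hsplit (m : NilRad (F := F) b) : ψ ((g * (1 + m.1)).trace) =
      ψ (g : Matrix (Fin n) (Fin n) F).trace * ψ (ℓ (nilRadEquivSubmodule b m)) := by
    rw [mul_add, mul_one, trace_add, AddChar.map_add_eq_mul]; rfl
  constructor
  · intro hP
    have hℓ (m) : ℓ m = 0 := trace_mul_eq_zero_of_mem_nilRadSubmodule hP m.2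
    simp_rw [hsplit, hℓ, AddChar.map_zero_eq_one, mul_one, Finset.sum_const, Finset.card_univ,
      nsmul_eq_mul]
  · intro hP
    obtain ⟨m, hm, hne⟩ := exists_trace_mul_ne_zero_of_mem_nilRadSubmodule hP
    have hℓ : ℓ ≠ 0 := fun h ↦ hne (LinearMap.congr_fun h ⟨m, hm⟩)
    rw [Fintype.sum_congr _ _ hsplit, ← Finset.mul_sum,
      (nilRadEquivSubmodule b).sum_comp fun m ↦ ψ (ℓ m),
      AddChar.sum_comp_linearMap_eq_zero hψ hℓ, mul_zero]

/-- for `g ∈ GL(n,F)`,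
`Σ_{m ∈ 𝔫} ψ(tr(g·(1+m)))` equals `|𝔫|·ψ(tr g)` if `g` lies in the standard
parabolic `P`, and equals `0` otherwise. -/
theorem sum_psi_trace_over_nilradical {F : Type} [Field F] [Fintype F] [DecidableEq F]
    (ψ : AddChar F ℂ) (hψ : ψ ≠ 1) {n k : ℕ} (b : Fin n → Fin k) (hb : Monotone b)
    (g : GL (Fin n) F) :
    ((∀ i j : Fin n, b j < b i → (g : Matrix (Fin n) (Fin n) F) i j = 0) →
      ∑ m : NilRad (F := F) b,
          ψ (((g : Matrix (Fin n) (Fin n) F) * (1 + m.1)).trace)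
        = (Fintype.card (NilRad (F := F) b) : ℂ) *
            ψ ((g : Matrix (Fin n) (Fin n) F).trace)) ∧
    ((¬ ∀ i j : Fin n, b j < b i → (g : Matrix (Fin n) (Fin n) F) i j = 0) →
      ∑ m : NilRad (F := F) b,
          ψ (((g : Matrix (Fin n) (Fin n) F) * (1 + m.1)).trace) = 0) :=
  sum_psi_trace_over_nilradical_general ψ hψ b g
end

section
/- Let F be a finite field with q elements, ψ : F → ℂ a nontrivial additive character, G = GL(n,F), B ⊂ G the subgroup of invertible upper triangular matrices, T ⊂ B the diagonal torus, and for b ∈ B let d(b) ∈ T denote its diagonal part. For f : T → ℂ define the induced class function J(f) : G → ℂ by J(f)(g) = Σ_{x ∈ G, x⁻¹gx ∈ B} f(d(x⁻¹gx)). Then for every f : T → ℂ and every g ∈ G: Σ_{h ∈ G} ψ(tr h)·J(f)(h⁻¹g) = q^{n(n−1)/2} · J(f')(g), where f'(t) = Σ_{s ∈ T} ψ(tr s)·f(s⁻¹t). (This is the function-theoretic content of Theorem 'convolution'(1): convolution with the γ-sheaf Φ_{G,ρ,ψ} = tr*L_ψ[n²](n²/2) commutes with the induction functor Ind_T^G,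 i.e. Φ_{G,ρ,ψ} ⋆ Ind_T^G(F) ≅ Ind_T^G(Φ_{T,ρ,ψ} ⋆ F) for GL(n).) -/
open scoped Classical in
/-- The induction of a function `f` on the diagonal torus `T` to a class function on
`G = GL(n,F)`: `J(f)(g) = Σ_{x ∈ G, x⁻¹gx ∈ B} f(d(x⁻¹gx))`, where `B` is the upper
triangular Borel and `d` extracts the diagonal part. -/
noncomputable def indT {F : Type} [Field F] [Fintype F] [DecidableEq F] {n : ℕ}
    (f : (Fin n → F) → ℂ) (g : GL (Fin n) F) : ℂ :=
  ∑ x : GL (Fin n) F,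
    if ∀ i j : Fin n, j < i → ((x⁻¹ * g * x : GL (Fin n) F) : Matrix (Fin n) (Fin n) F) i j = 0
    then f (fun i => ((x⁻¹ * g * x : GL (Fin n) F) : Matrix (Fin n) (Fin n) F) i i)
    else 0

/-!
Write `J(f)(g) = Σ_x φ(x⁻¹gx)`, where `φ` is `f ∘ d` on `B` and `0` off `B`. Since
`h ↦ ψ(tr h)` is a class function, it suffices to show `Σ_h ψ(tr h) φ(h⁻¹y) = q^{n(n-1)/2} φ'(y)`
for every `y`, with `φ'` built from `f'` in the same way. Substituting `h = y c` and writing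
`c ∈ B` as `t + N` with `t` diagonal and `N` strictly upper triangular, the summand factors as
`ψ(Σ y_ii t_i) f(t⁻¹) · ψ(tr(yN))`. Since `N ↦ ψ(tr(yN))` is a character of the strictly upper
triangular matrices that is trivial exactly when `y` is upper triangular, the sum over `N` is
`q^{n(n-1)/2}` for `y ∈ B` and `0` otherwise; for `y ∈ B` the substitution `s = d(y) t` turns
the remaining torus sum into `f'(d(y))`.
-/

theorem Fin.card_pairs_lt (n : ℕ) :
    Fintype.card {p : Fin n × Fin n // p.1 < p.2} = n * (n - 1) / 2 := by
  have e : {p : Fin n × Fin n // p.1 < p.2} ≃ Σ j : Fin n, Fin j :=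
    { toFun p := ⟨p.1.2, ⟨p.1.1, p.2⟩⟩
      invFun q := ⟨(⟨q.2, q.2.isLt.trans q.1.isLt⟩, q.1), q.2.isLt⟩
      left_inv _ := rfl
      right_inv _ := rfl }
  rw [Fintype.card_congr e, Fintype.card_sigma]
  simp only [Fintype.card_fin]
  rw [Fin.sum_univ_eq_sum_range (fun i => i), Finset.sum_range_id]

theorem sum_mul_sum_conj_comm {G R : Type*} [Group G] [Fintype G] [NonUnitalNonAssocSemiring R]
    (κ φ : G → R) (hκ : ∀ x h, κ (x⁻¹ * h * x) = κ h) (g : G) :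
    ∑ h, κ h * ∑ x, φ (x⁻¹ * (h⁻¹ * g) * x) = ∑ x, ∑ h, κ h * φ (h⁻¹ * (x⁻¹ * g * x)) := by
  simp_rw [Finset.mul_sum]
  rw [Finset.sum_comm]
  refine Finset.sum_congr rfl fun x _ =>
    Fintype.sum_equiv ((Equiv.mulLeft x⁻¹).trans (Equiv.mulRight x)) _ _ fun h => ?_
  simp only [Equiv.trans_apply, Equiv.coe_mulLeft, Equiv.coe_mulRight, hκ]
  congr 2
  group

namespace Matrix

variable {m R K : Type*}

section StrictUpperTriangular

variable (m R) in
def strictUpperTriangular [LE m] [AddGroup R] : AddSubgroup (Matrix m m R) where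
  carrier := {N | ∀ i j, j ≤ i → N i j = 0}
  zero_mem' _ _ _ := rfl
  add_mem' hM hN i j hji := by simp [hM i j hji, hN i j hji]
  neg_mem' hN i j hji := by simp [hN i j hji]

instance [Fintype m] [LinearOrder m] [AddGroup R] [DecidableEq R] :
    DecidablePred (· ∈ strictUpperTriangular m R) := fun _ =>
  -- instance search does not find this by itself
  @Fintype.decidableForallFintype m _ (fun _ => Fintype.decidableForallFintype) _

def strictUpperTriangularEquiv [LinearOrder m] [AddGroup R] :
    strictUpperTriangular m R ≃ ({p : m × m // p.1 < p.2} → R) where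
  toFun N p := (N : Matrix m m R) p.1.1 p.1.2
  invFun v := ⟨of fun i j => if h : i < j then v ⟨(i, j), h⟩ else 0,
    fun i j hji => by simp [not_lt.2 hji]⟩
  left_inv N := by
    ext i j
    by_cases h : i < j
    · simp [h]
    · simp [h, N.2 i j (not_lt.1 h)]
  right_inv v := by
    funext p
    simp [p.2]

theorem card_strictUpperTriangular [LinearOrder m] [Fintype m] [AddGroup R] [Fintype R]
    [Fintype (strictUpperTriangular m R)] :
    Fintype.card (strictUpperTriangular m R) =
      Fintype.card R ^ Fintype.card {p : m × m // p.1 < p.2} := by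
  rw [Fintype.card_congr strictUpperTriangularEquiv, Fintype.card_fun]

variable [Fintype m] [LinearOrder m]

theorem trace_mul_eq_zero_of_isUpperTriangular [Ring R] {y N : Matrix m m R}
    (hy : y.IsUpperTriangular) (hN : N ∈ strictUpperTriangular m R) : (y * N).trace = 0 :=
  Finset.sum_eq_zero fun i _ => Finset.sum_eq_zero fun j _ => by
    dsimp only
    rcases lt_or_ge j i with hji | hij
    · rw [hy hji, zero_mul]
    · rw [hN j i hij, mul_zero]

theorem isUpperTriangular_of_forall_addChar_trace_mul_eq_one [DecidableEq m] [Field K]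
    {M : Type*} [Monoid M] {ψ : AddChar K M} (hψ : ψ ≠ 1) {y : Matrix m m K}
    (h : ∀ N ∈ strictUpperTriangular m K, ψ (y * N).trace = 1) : y.IsUpperTriangular := by
  intro i j hji
  by_contra hy
  obtain ⟨a, ha⟩ := AddChar.ne_one_iff.1 hψ
  have hN : single j i (a / y i j) ∈ strictUpperTriangular m K := fun k l hlk =>
    single_apply_of_ne _ _ _ _ _ fun ⟨hjk, hil⟩ => (hjk ▸ hil ▸ hlk).not_gt hji
  have := h _ hN
  rw [trace_mul_single, op_smul_eq_mul, mul_div_cancel₀ _ hy] at this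
  exact ha this

theorem sum_addChar_trace_mul_strictUpperTriangular [DecidableEq m] [Field K] [Fintype K]
    [DecidableEq K]
    [Fintype (strictUpperTriangular m K)] [CommRing R] [IsDomain R] {ψ : AddChar K R}
    (hψ : ψ ≠ 1) (y : Matrix m m K) :
    ∑ N : strictUpperTriangular m K, ψ (y * N).trace =
      if y.IsUpperTriangular then (Fintype.card K : R) ^ Fintype.card {p : m × m // p.1 < p.2}
      else 0 := by
  classical
  let χ : AddChar (strictUpperTriangular m K) R := ψ.compAddMonoidHom
    (traceAddMonoidHom m K |>.comp <| (AddMonoidHom.mulLeft y).comp (AddSubgroup.subtype _))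
  have hχ : χ = 0 ↔ y.IsUpperTriangular := by
    refine ⟨fun h => isUpperTriangular_of_forall_addChar_trace_mul_eq_one hψ fun N hN => ?_,
      fun hy => AddChar.eq_zero_iff.2 fun N => ?_⟩
    · exact AddChar.eq_zero_iff.1 h ⟨N, hN⟩
    · simp [χ, trace_mul_eq_zero_of_isUpperTriangular hy N.2]
  rw [show ∑ N : strictUpperTriangular m K, ψ (y * N).trace = ∑ N, χ N from rfl,
    AddChar.sum_eq_ite, card_strictUpperTriangular]
  simp only [hχ, Nat.cast_pow]

end StrictUpperTriangular

theorem trace_mul_diagonal_add [Fintype m] [DecidableEq m] [NonUnitalNonAssocSemiring R]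
    (y N : Matrix m m R) (t : m → R) :
    (y * (diagonal t + N)).trace = ∑ i, y i i * t i + (y * N).trace := by
  simp [mul_add, trace, mul_diagonal, Finset.sum_add_distrib]

theorem isUpperTriangular_diagonal_add [Preorder m] [DecidableEq m] [AddGroup R] (t : m → R)
    {N : Matrix m m R} (hN : N ∈ strictUpperTriangular m R) :
    (diagonal t + N).IsUpperTriangular := fun i j (hji : j < i) => by
  simp [diagonal_apply_ne _ hji.ne', hN i j hji.le]

theorem diag_diagonal_add [Preorder m] [DecidableEq m] [AddGroup R] (t : m → R)
    {N : Matrix m m R} (hN : N ∈ strictUpperTriangular m R) : (diagonal t + N).diag = t :=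
  funext fun i => by simp [hN i i le_rfl]

theorem IsUpperTriangular.mul_apply_self [Fintype m] [LinearOrder m]
    [NonUnitalNonAssocSemiring R] {A B : Matrix m m R} (hA : A.IsUpperTriangular)
    (hB : B.IsUpperTriangular) (i : m) : (A * B) i i = A i i * B i i := by
  refine Finset.sum_eq_single i (fun j _ hji => ?_) (by simp)
  dsimp only
  rcases lt_or_gt_of_ne hji with hji | hij
  · rw [hA hji, zero_mul]
  · rw [hB hij, mul_zero]

namespace GeneralLinearGroup

variable [Fintype m] [DecidableEq m] [LinearOrder m]

theorem isUpperTriangular_inv [CommRing R] {c : GL m R}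
    (hc : (c : Matrix m m R).IsUpperTriangular) :
    ((c⁻¹ : GL m R) : Matrix m m R).IsUpperTriangular := by
  let := c.invertible
  rw [coe_units_inv]
  exact blockTriangular_inv_of_blockTriangular hc

theorem isUpperTriangular_inv_iff [CommRing R] {c : GL m R} :
    ((c⁻¹ : GL m R) : Matrix m m R).IsUpperTriangular ↔ (c : Matrix m m R).IsUpperTriangular :=
  ⟨fun h => inv_inv c ▸ isUpperTriangular_inv h, isUpperTriangular_inv⟩

theorem apply_self_ne_zero_of_isUpperTriangular [Field K] {c : GL m K}
    (hc : (c : Matrix m m K).IsUpperTriangular) (i : m) : (c : Matrix m m K) i i ≠ 0 := by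
  have hdet := c.det_ne_zero
  rw [det_of_isUpperTriangular hc, Finset.prod_ne_zero_iff] at hdet
  exact hdet i (Finset.mem_univ i)

theorem inv_apply_self_of_isUpperTriangular [Field K] {c : GL m K}
    (hc : (c : Matrix m m K).IsUpperTriangular) (i : m) :
    ((c⁻¹ : GL m K) : Matrix m m K) i i = ((c : Matrix m m K) i i)⁻¹ := by
  refine eq_inv_of_mul_eq_one_right ?_
  rw [← hc.mul_apply_self (isUpperTriangular_inv hc), ← Units.val_mul, mul_inv_cancel,
    Units.val_one, one_apply_eq]

def upperTriangularEquiv [Field K] :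
    {c : GL m K // (c : Matrix m m K).IsUpperTriangular} ≃
      (m → Kˣ) × strictUpperTriangular m K where
  toFun c := (fun i => Units.mk0 _ (apply_self_ne_zero_of_isUpperTriangular c.2 i),
    ⟨(c.1 : Matrix m m K) - diagonal (diag c.1), fun i j hji => by
      rcases hji.lt_or_eq with hji | rfl
      · simp [c.2 hji, diagonal_apply_ne _ hji.ne']
      · simp⟩)
  invFun tN := ⟨mkOfDetNeZero (diagonal (fun i => (tN.1 i : K)) + tN.2) (by
      rw [det_of_isUpperTriangular (isUpperTriangular_diagonal_add _ tN.2.2)]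
      simp [Finset.prod_ne_zero_iff, fun i => tN.2.2 i i le_rfl]),
    isUpperTriangular_diagonal_add _ tN.2.2⟩
  left_inv c := Subtype.ext <| Units.ext <| add_sub_cancel _ _
  right_inv tN := by
    have hdiag := diag_diagonal_add (fun i => (tN.1 i : K)) tN.2.2
    refine Prod.ext (funext fun i => Units.ext (congrFun hdiag i)) (Subtype.ext ?_)
    simp only [val_mkOfDetNeZero, hdiag, add_sub_cancel_left]

theorem sum_ite_isUpperTriangular [Field K] [Fintype K] [DecidableEq K] {M : Type*}
    [AddCommMonoid M] (Φ : Matrix m m K → M) :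
    ∑ c : GL m K, (if (c : Matrix m m K).IsUpperTriangular then Φ c else 0) =
      ∑ t : m → Kˣ, ∑ N : strictUpperTriangular m K, Φ (diagonal (fun i => (t i : K)) + N) := by
  rw [← Finset.sum_filter,
    Finset.sum_subtype _ (p := fun c : GL m K => (c : Matrix m m K).IsUpperTriangular) (by simp),
    ← Fintype.sum_prod_type']
  exact (Fintype.sum_equiv upperTriangularEquiv.symm _ _ fun _ => rfl).symm

end GeneralLinearGroup

end Matrix

open Matrix

section GeneralLinear

variable {F : Type} [Field F] [DecidableEq F] {n : ℕ}

noncomputable def borelLift (f : (Fin n → F) → ℂ) (b : GL (Fin n) F) : ℂ :=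
  if (b : Matrix (Fin n) (Fin n) F).IsUpperTriangular then f (b : Matrix (Fin n) (Fin n) F).diag
  else 0

theorem borelLift_inv (f : (Fin n → F) → ℂ) (c : GL (Fin n) F) :
    borelLift f c⁻¹ = if (c : Matrix (Fin n) (Fin n) F).IsUpperTriangular
      then f fun i => ((c : Matrix (Fin n) (Fin n) F) i i)⁻¹ else 0 := by
  simp only [borelLift, GeneralLinearGroup.isUpperTriangular_inv_iff]
  split_ifs with hc
  · exact congrArg f (funext (GeneralLinearGroup.inv_apply_self_of_isUpperTriangular hc))
  · rfl

variable [Fintype F]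

def torusConv (ψ : AddChar F ℂ) (f : (Fin n → F) → ℂ) (t : Fin n → F) : ℂ :=
  ∑ s : Fin n → Fˣ, ψ (∑ i, (s i : F)) * f (fun i => ((s i)⁻¹ : F) * t i)

theorem torusConv_eq_sum_units (ψ : AddChar F ℂ) (f : (Fin n → F) → ℂ) {d : Fin n → F}
    (hd : ∀ i, d i ≠ 0) :
    torusConv ψ f d = ∑ t : Fin n → Fˣ, ψ (∑ i, d i * t i) * f fun i => (t i : F)⁻¹ := by
  let a : Fin n → Fˣ := fun i => Units.mk0 (d i) (hd i)
  refine (Fintype.sum_equiv (Equiv.mulLeft a) _ _ fun t => ?_).symm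
  simp only [Equiv.coe_mulLeft, Pi.mul_apply, Units.val_mul, a, Units.val_mk0,
    _root_.mul_inv_rev, inv_mul_cancel_right₀ (hd _)]

theorem indT_eq_sum_borelLift (f : (Fin n → F) → ℂ) (g : GL (Fin n) F) :
    indT f g = ∑ x, borelLift f (x⁻¹ * g * x) :=
  Finset.sum_congr rfl fun _ _ => if_congr Iff.rfl rfl rfl

theorem sum_psi_trace_mul_borelLift (ψ : AddChar F ℂ) (hψ : ψ ≠ 1) (f : (Fin n → F) → ℂ)
    (y : GL (Fin n) F) :
    ∑ h : GL (Fin n) F, ψ ((h : Matrix (Fin n) (Fin n) F).trace) * borelLift f (h⁻¹ * y) =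
      (Fintype.card F : ℂ) ^ (n * (n - 1) / 2) * borelLift (torusConv ψ f) y := by
  set Y : Matrix (Fin n) (Fin n) F := ↑y
  calc ∑ h : GL (Fin n) F, ψ ((h : Matrix (Fin n) (Fin n) F).trace) * borelLift f (h⁻¹ * y)
      = ∑ c : GL (Fin n) F, ψ (Y * c).trace * borelLift f c⁻¹ :=
        (Fintype.sum_equiv (Equiv.mulLeft y) _ _ fun c => by simp [Y, _root_.mul_inv_rev]).symm
    _ = ∑ c : GL (Fin n) F, if (c : Matrix (Fin n) (Fin n) F).IsUpperTriangular
          then ψ (Y * c).trace * f (fun i => ((c : Matrix (Fin n) (Fin n) F) i i)⁻¹) else 0 := by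
        simp only [borelLift_inv, mul_ite, mul_zero]
    _ = ∑ t : Fin n → Fˣ, ∑ N : strictUpperTriangular (Fin n) F,
          ψ (Y * N).trace * (ψ (∑ i, Y i i * t i) * f fun i => (t i : F)⁻¹) := by
        rw [GeneralLinearGroup.sum_ite_isUpperTriangular
          (fun M => ψ (Y * M).trace * f fun i => (M i i)⁻¹)]
        refine Finset.sum_congr rfl fun t _ => Finset.sum_congr rfl fun N _ => ?_
        have hdiag := congrFun (diag_diagonal_add (fun i => (t i : F)) N.2)
        simp only [diag_apply] at hdiag
        rw [trace_mul_diagonal_add, AddChar.map_add_eq_mul]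
        simp only [hdiag]
        ring
    _ = (Fintype.card F : ℂ) ^ (n * (n - 1) / 2) * borelLift (torusConv ψ f) y := by
        simp only [← Finset.sum_mul, sum_addChar_trace_mul_strictUpperTriangular hψ,
          Fin.card_pairs_lt]
        rw [borelLift]
        split_ifs with hY
        · rw [← Finset.mul_sum]
          exact congrArg _ (torusConv_eq_sum_units ψ f
            (GeneralLinearGroup.apply_self_ne_zero_of_isUpperTriangular hY)).symm
        · simp

end GeneralLinear

/-- convolution with `h ↦ ψ(tr h)` commutes with induction from the
diagonal torus: `Σ_{h ∈ G} ψ(tr h)·J(f)(h⁻¹g) = q^{n(n-1)/2} · J(f')(g)` where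
`f'(t) = Σ_{s ∈ T} ψ(tr s)·f(s⁻¹t)`. -/
theorem conv_psi_trace_comm_ind {F : Type} [Field F] [Fintype F] [DecidableEq F]
    (ψ : AddChar F ℂ) (hψ : ψ ≠ 1) {n : ℕ} (f : (Fin n → F) → ℂ) (g : GL (Fin n) F) :
    ∑ h : GL (Fin n) F, ψ ((h : Matrix (Fin n) (Fin n) F).trace) * indT f (h⁻¹ * g)
      = (Fintype.card F : ℂ) ^ (n * (n - 1) / 2) *
        indT (fun t => ∑ s : Fin n → Fˣ, ψ (∑ i, (s i : F)) * f (fun i => ((s i)⁻¹ : F) * t i)) g := by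
  have hκ (x h : GL (Fin n) F) :
      ψ ((x⁻¹ * h * x : GL (Fin n) F) : Matrix (Fin n) (Fin n) F).trace =
        ψ (h : Matrix (Fin n) (Fin n) F).trace := by
    rw [Units.val_mul, Units.val_mul, trace_units_conj']
  simp only [indT_eq_sum_borelLift]
  rw [sum_mul_sum_conj_comm _ _ hκ, Finset.mul_sum]
  exact Finset.sum_congr rfl fun x _ => sum_psi_trace_mul_borelLift ψ hψ f _
end

section
/- Let F be a finite field with q elements, ψ : F → ℂ a nontrivial additive character, 𝔤 = M_n(F) the space of all n×n matrices, 𝔟 ⊂ 𝔤 the upper triangular matrices, and 𝔱 ≅ F^n the diagonal matrices. For f : 𝔱 → ℂ define J(f) : 𝔤 → ℂ by J(f)(x) = Σ_{g ∈ GL(n,F), g⁻¹xg ∈ 𝔟} f(d(g⁻¹xg)), where d extracts the diagonal. Then for every f : 𝔱 → ℂ and every y ∈ 𝔤: Σ_{x ∈ 𝔤} ψ(tr(xy))·J(f)(x) = q^{n(n−1)/2} · J(f̂)(y), where f̂(t') = Σ_{t ∈ 𝔱} f(t)·ψ(tr(t t')). (This is the function-theoretic content of the Lemma in Section 'gln':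 the Fourier–Deligne transform F_𝔤 on the Lie algebra, defined using the trace pairing (x,y) ↦ tr(xy), commutes with the induction functor: F_𝔤 ∘ Ind_𝔱^𝔤 ≅ Ind_𝔱^𝔤 ∘ F_𝔱.) -/
/-!
Summing over `g` last, the left side is `∑_g ∑_x ψ(tr(xy)) [g⁻¹xg ∈ 𝔟] f(d(g⁻¹xg))`.
Substituting `b = g⁻¹xg` turns the inner sum into `∑_{b ∈ 𝔟} ψ(tr(bz)) f(d b)` with
`z = g⁻¹yg`. Writing `b = t + u` with `t ∈ 𝔱` and `u` strictly upper triangular, the pairing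
splits as `tr(bz) = ∑ tᵢ zᵢᵢ + ∑_{i<j} u_{ij} z_{ji}`, so the sum factors: the `t`-sum is
`f̂(d z)`, and by orthogonality of characters the `u`-sum is `q^{n(n-1)/2}` if `z ∈ 𝔟` and `0`
otherwise.
-/

open scoped Classical in
/-- The induction of a function `f` on the diagonal Cartan `𝔱 ≅ F^n` to an
`Ad`-invariant function on `𝔤 = M_n(F)`:
`J(f)(x) = Σ_{g ∈ GL(n,F), g⁻¹xg ∈ 𝔟} f(d(g⁻¹xg))`, where `𝔟` is the upper
triangular matrices and `d` extracts the diagonal. -/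
noncomputable def indLie {F : Type} [Field F] [Fintype F] [DecidableEq F] {n : ℕ}
    (f : (Fin n → F) → ℂ) (x : Matrix (Fin n) (Fin n) F) : ℂ :=
  ∑ g : GL (Fin n) F,
    if ∀ i j : Fin n, j < i →
        (((g⁻¹ : GL (Fin n) F) : Matrix (Fin n) (Fin n) F) * x *
          (g : Matrix (Fin n) (Fin n) F)) i j = 0
    then f (fun i => (((g⁻¹ : GL (Fin n) F) : Matrix (Fin n) (Fin n) F) * x *
          (g : Matrix (Fin n) (Fin n) F)) i i)
    else 0

open Matrix

theorem AddChar.map_sum_eq_prod {ι A M : Type*} [AddCommMonoid A] [CommMonoid M]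
    (ψ : AddChar A M) (s : Finset ι) (g : ι → A) : ψ (∑ i ∈ s, g i) = ∏ i ∈ s, ψ (g i) :=
  map_prod ψ.toMonoidHom (fun i => Multiplicative.ofAdd (g i)) s

theorem AddChar.sum_apply_dotProduct {F ι : Type*} [Field F] [Fintype F] [DecidableEq F]
    [Fintype ι] [DecidableEq ι] {ψ : AddChar F ℂ} (hψ : ψ ≠ 1) (w : ι → F) :
    ∑ u : ι → F, ψ (u ⬝ᵥ w) = if w = 0 then (Fintype.card F : ℂ) ^ Fintype.card ι else 0 := by
  calc ∑ u : ι → F, ψ (u ⬝ᵥ w)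
      = ∏ i, ∑ c : F, ψ (c * w i) := by
        simp only [dotProduct, ψ.map_sum_eq_prod, Fintype.prod_sum]
    _ = ∏ i, if w i = 0 then (Fintype.card F : ℂ) else 0 := by
        simp only [ψ.sum_mulShift _ (AddChar.IsPrimitive.of_ne_one hψ), Nat.cast_ite,
          Nat.cast_zero]
    _ = _ := by
        simp only [Finset.prod_ite_zero, Finset.prod_const, Finset.card_univ, funext_iff,
          Pi.zero_apply, Finset.mem_univ, true_implies]

theorem Fintype.card_subtype_fst_lt_snd {m : Type*} [Fintype m] [LinearOrder m] :
    Fintype.card {p : m × m // p.1 < p.2} = (Fintype.card m).choose 2 := by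
  rw [Fintype.card_subtype, Fintype.card_product_filter_lt]

namespace Matrix

theorem sum_trace_mul_units_conj {m R M : Type*} [Fintype m] [DecidableEq m] [CommRing R]
    [Fintype R] [AddCommMonoid M] (g : (Matrix m m R)ˣ) (y : Matrix m m R)
    (φ : R → Matrix m m R → M) :
    ∑ x, φ (x * y).trace ((g⁻¹ : (Matrix m m R)ˣ) * x * g)
      = ∑ b, φ (b * ((g⁻¹ : (Matrix m m R)ˣ) * y * g)).trace b := by
  refine Fintype.sum_equiv ((Units.mulLeft g⁻¹).trans (Units.mulRight g)) _ _ fun x => ?_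
  have h_conj : ((g⁻¹ : (Matrix m m R)ˣ) * x * g) * ((g⁻¹ : (Matrix m m R)ˣ) * y * g)
      = (g⁻¹ : (Matrix m m R)ˣ) * (x * y) * g := by
    simp only [mul_assoc, Units.mul_inv_cancel_left]
  simp only [Equiv.trans_apply, Units.mulLeft_apply, Units.mulRight_apply, h_conj,
    trace_units_conj']

section UpperTriangular

variable {m R : Type*} [LinearOrder m] [CommRing R]

def strictUpperOf (u : {p : m × m // p.1 < p.2} → R) : Matrix m m R :=
  of fun i j => if h : i < j then u ⟨(i, j), h⟩ else 0

@[simp]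
theorem strictUpperOf_apply_self (u : {p : m × m // p.1 < p.2} → R) (i : m) :
    strictUpperOf u i i = 0 := by
  simp [strictUpperOf]

variable [Fintype m]

theorem trace_strictUpperOf_mul (u : {p : m × m // p.1 < p.2} → R) (z : Matrix m m R) :
    (strictUpperOf u * z).trace = u ⬝ᵥ fun p => z p.1.2 p.1.1 := by
  have h_upper (p : {p : m × m // p.1 < p.2}) : strictUpperOf u p.1.1 p.1.2 = u p := by
    simp [strictUpperOf, p.2]
  have h_lower (p : {p : m × m // ¬p.1 < p.2}) : strictUpperOf u p.1.1 p.1.2 = 0 := by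
    simp [strictUpperOf, p.2]
  calc (strictUpperOf u * z).trace
      = ∑ p : m × m, strictUpperOf u p.1 p.2 * z p.2 p.1 := by
        simp only [trace, diag, mul_apply]
        exact (Fintype.sum_prod_type' _).symm
    _ = u ⬝ᵥ fun p => z p.1.2 p.1.1 := by
        rw [← Fintype.sum_subtype_add_sum_subtype (fun p : m × m => p.1 < p.2)]
        simp [h_upper, h_lower, dotProduct]

theorem trace_diagonal_add_strictUpperOf_mul (t : m → R) (u : {p : m × m // p.1 < p.2} → R)
    (z : Matrix m m R) :
    ((diagonal t + strictUpperOf u) * z).trace = t ⬝ᵥ z.diag + u ⬝ᵥ fun p => z p.1.2 p.1.1 := by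
  rw [add_mul, trace_add, trace_strictUpperOf_mul]
  simp [trace, diagonal_mul, dotProduct]

def upperTriangularEquiv :
    (m → R) × ({p : m × m // p.1 < p.2} → R) ≃
      {b : Matrix m m R // ∀ i j, j < i → b i j = 0} where
  toFun tu := ⟨diagonal tu.1 + strictUpperOf tu.2, fun i j hji => by
    simp [strictUpperOf, hji.ne', hji.not_gt]⟩
  invFun b := (fun i => b.1 i i, fun p => b.1 p.1.1 p.1.2)
  left_inv tu := by
    ext p
    · simp
    · simp [strictUpperOf, p.2, p.2.ne]
  right_inv b := by
    ext i j
    rcases lt_trichotomy i j with h | rfl | h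
    · simp [strictUpperOf, h, h.ne]
    · simp
    · simp [strictUpperOf, h.ne', h.not_gt, b.2 i j h]

end UpperTriangular

open scoped Classical in
theorem sum_upperTriangular_addChar_trace_mul {F m : Type*} [Field F] [Fintype F] [Fintype m]
    [DecidableEq m] [LinearOrder m] {ψ : AddChar F ℂ} (hψ : ψ ≠ 1) (f : (m → F) → ℂ)
    (z : Matrix m m F) :
    ∑ b : Matrix m m F,
        ψ (b * z).trace * (if ∀ i j, j < i → b i j = 0 then f (fun i => b i i) else 0)
      = (Fintype.card F : ℂ) ^ (Fintype.card m).choose 2 *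
        (if ∀ i j, j < i → z i j = 0 then ∑ t, f t * ψ (t ⬝ᵥ z.diag) else 0) := by
  set zLower : {p : m × m // p.1 < p.2} → F := fun p => z p.1.2 p.1.1
  have hzLower : zLower = 0 ↔ ∀ i j, j < i → z i j = 0 :=
    ⟨fun h i j hji => congrFun h ⟨(j, i), hji⟩, fun h => funext fun p => h _ _ p.2⟩
  calc ∑ b : Matrix m m F,
        ψ (b * z).trace * (if ∀ i j, j < i → b i j = 0 then f (fun i => b i i) else 0)
      = ∑ b : {b : Matrix m m F // ∀ i j, j < i → b i j = 0},
          ψ (b.1 * z).trace * f (fun i => b.1 i i) := by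
        simp only [mul_ite, mul_zero]
        rw [← Finset.sum_filter]
        exact Finset.sum_subtype _ (by simp) _
    _ = ∑ tu : (m → F) × ({p : m × m // p.1 < p.2} → F),
          ψ (tu.1 ⬝ᵥ z.diag) * ψ (tu.2 ⬝ᵥ zLower) * f tu.1 := by
        rw [← upperTriangularEquiv.sum_comp]
        simp [upperTriangularEquiv, trace_diagonal_add_strictUpperOf_mul,
          AddChar.map_add_eq_mul, zLower]
    _ = (∑ t, f t * ψ (t ⬝ᵥ z.diag)) * ∑ u, ψ (u ⬝ᵥ zLower) := by
        rw [Fintype.sum_prod_type, Finset.sum_mul_sum]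
        exact Fintype.sum_congr _ _ fun t => Fintype.sum_congr _ _ fun u => by ring
    _ = _ := by
        rw [AddChar.sum_apply_dotProduct hψ, Fintype.card_subtype_fst_lt_snd]
        simp only [hzLower, mul_ite, zero_mul, mul_comm]

end Matrix

/-- the Fourier transform on `𝔤 = M_n(F)` with respect to the trace
pairing commutes with induction from the Cartan:
`Σ_{x ∈ 𝔤} ψ(tr(xy))·J(f)(x) = q^{n(n-1)/2} · J(f̂)(y)` where
`f̂(t') = Σ_{t ∈ 𝔱} f(t)·ψ(tr(t t'))`. -/
theorem fourier_comm_ind_lie {F : Type} [Field F] [Fintype F] [DecidableEq F]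
    (ψ : AddChar F ℂ) (hψ : ψ ≠ 1) {n : ℕ} (f : (Fin n → F) → ℂ)
    (y : Matrix (Fin n) (Fin n) F) :
    ∑ x : Matrix (Fin n) (Fin n) F, ψ ((x * y).trace) * indLie f x
      = (Fintype.card F : ℂ) ^ (n * (n - 1) / 2) *
        indLie (fun t' => ∑ t : Fin n → F, f t * ψ (∑ i, t i * t' i)) y := by
  classical
  unfold indLie
  simp only [Finset.mul_sum]
  rw [Finset.sum_comm]
  refine Fintype.sum_congr _ _ fun g => ?_
  have hsubst := sum_trace_mul_units_conj g y
    (fun s b => ψ s * if ∀ i j, j < i → b i j = 0 then f (fun i => b i i) else 0)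
  have hupper := sum_upperTriangular_addChar_trace_mul hψ f ((g⁻¹ : GL (Fin n) F) * y * g)
  rw [Fintype.card_fin, Nat.choose_two_right] at hupper
  -- the links of this chain differ only in their `Decidable` instances
  refine Eq.trans ?_ (hsubst.trans (Eq.trans ?_ (hupper.trans ?_))) <;> congr! 3
end

section
/- Let F be a finite field, ψ : F → ℂ a nontrivial additive character, A a finite abelian group, and λ_1, …, λ_n : F^× → A group homomorphisms. Define p : (F^×)^n → A by p(x_1,…,x_n) = λ_1(x_1)···λ_n(x_n) and Φ : A → ℂ by Φ(a) = Σ_{x ∈ (F^×)^n, p(x) = a} ψ(x_1 + … + x_n). Then for every group homomorphism θ : A → ℂ^× and every a ∈ A: Σ_{s ∈ A} Φ(s)·θ(s⁻¹a) = (Π_{i=1}^{n} Σ_{y ∈ F^×} ψ(y)·θ(λ_i(y))⁻¹) · θ(a); that is, θ is an eigenfunction of convolution with Φ, with eigenvalue the product of the Gauss sums of the characters θ∘λ_i. (This is the function-theoretic content of Corollary 'fignya': Φ_{T,ρ,ψ} ⋆ L ≅ H_{ρ,L,ψ,!} ⊗ L for a tame local system L on the torus T.) -/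
set_option maxHeartbeats 1000000

open scoped Classical in
/-- The γ-function `Φ = Φ_{T,ρ,ψ}` on a finite abelian group `A` (the `F`-points of a
split torus), attached to cocharacters `λ_1,…,λ_n : F^× → A`:
`Φ(a) = Σ_{x ∈ (F^×)^n, λ_1(x_1)⋯λ_n(x_n) = a} ψ(x_1 + ⋯ + x_n)`. -/
noncomputable def PhiTorus {F : Type} [Field F] [Fintype F] (ψ : AddChar F ℂ)
    {A : Type} [CommGroup A] {n : ℕ} (lam : Fin n → (Fˣ →* A)) (a : A) : ℂ :=
  ∑ x : Fin n → Fˣ, if (∏ i, lam i (x i)) = a then ψ (∑ i, (x i : F)) else 0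

/-- An additive character sends a finite sum to the product of its values. -/
lemma addchar_map_sum {F M : Type*} [AddCommMonoid F] [CommMonoid M] (ψ : AddChar F M)
    {ι : Type*} (s : Finset ι) (f : ι → F) : ψ (∑ i ∈ s, f i) = ∏ i ∈ s, ψ (f i) := by
  induction s using Finset.cons_induction with
  | empty => simp
  | cons i s hi ih => simp [Finset.sum_cons, Finset.prod_cons, ψ.map_add_eq_mul, ih]

/-- every character `θ : A → ℂ^×` is an eigenfunction of convolution with
`Φ`, with eigenvalue the product of the Gauss sums of the characters `θ ∘ λ_i`:
`Σ_{s ∈ A} Φ(s)·θ(s⁻¹a) = (Π_i Σ_{y ∈ F^×} ψ(y)·θ(λ_i(y))⁻¹) · θ(a)`. -/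
theorem char_eigenfunction_of_conv_PhiTorus {F : Type} [Field F] [Fintype F] [DecidableEq F]
    (ψ : AddChar F ℂ) (hψ : ψ ≠ 1) {A : Type} [CommGroup A] [Fintype A] {n : ℕ}
    (lam : Fin n → (Fˣ →* A)) (θ : A →* ℂˣ) (a : A) :
    ∑ s : A, PhiTorus ψ lam s * (θ (s⁻¹ * a) : ℂ)
      = (∏ i, ∑ y : Fˣ, ψ (y : F) * ((θ (lam i y))⁻¹ : ℂ)) * (θ a : ℂ) := by
  unfold PhiTorus
  simp only [Finset.sum_mul]
  rw [Finset.sum_comm]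
  rw [Finset.prod_univ_sum, Finset.sum_mul]
  rw [Fintype.piFinset_univ]
  refine Finset.sum_congr (by ext x; simp) fun x _ => ?_
  rw [Finset.sum_eq_single (∏ i, lam i (x i))]
  · simp only [if_true]
    rw [addchar_map_sum, map_mul, map_inv, Units.val_mul, Units.val_inv_eq_inv_val, map_prod θ]
    push_cast
    rw [Finset.prod_mul_distrib, mul_assoc, Finset.prod_inv_distrib]
  · intro s _ hs
    rw [if_neg (fun h => hs h.symm), zero_mul]
  · intro h; exact absurd (Finset.mem_univ _) h
end
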